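/- Let (p̂_1,…,p̂_m) be a family of [0,1]-valued random variables that is PRDS on the set H0 of null indices of cardinality m0, and suppose that for every null index i and every k ∈ {1,…,m}, P(p̂_i ≤ αk/m) ≤ αk/m. Then the FDR of the BH procedure at level α applied to (p̂_1,…,p̂_m) satisfies FDR ≤ m0·α/m. -/

import Mathlib

open MeasureTheory ProbabilityTheory Finset
open scoped Classical ENNReal

/-- Hypothesis `i` is rejected by the Benjamini–Hochberg procedure at level `α`. -/
def bhRejects (m : ℕ) (α : ℝ) (p : Fin m → ℝ) (i : Fin m) : Prop :=
  ∃ k ∈ Finset.Icc 1 m,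
    p i ≤ α * k / m ∧
      k ≤ (Finset.univ.filter fun j => p j ≤ α * (k : ℝ) / m).card

/-- Number of rejections of the BH procedure at level `α`. -/
noncomputable def bhR (m : ℕ) (α : ℝ) (p : Fin m → ℝ) : ℕ :=
  (Finset.univ.filter fun i => bhRejects m α p i).card

/-- Number of false positives (rejected null hypotheses) of BH at level `α`. -/
noncomputable def bhFP (m : ℕ) (α : ℝ) (H0 : Finset (Fin m)) (p : Fin m → ℝ) : ℕ :=
  (H0.filter fun i => bhRejects m α p i).card

/-- False discovery proportion of BH at level `α` (with the convention 0/0 = 0). -/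
noncomputable def bhFDP (m : ℕ) (α : ℝ) (H0 : Finset (Fin m)) (p : Fin m → ℝ) : ℝ :=
  (bhFP m α H0 p : ℝ) / (bhR m α p : ℝ)

/-- A set `A ⊆ ℝ^m` is nondecreasing if it is upward closed for the componentwise order. -/
def IsNondecreasingSet {m : ℕ} (A : Set (Fin m → ℝ)) : Prop :=
  ∀ x ∈ A, ∀ y : Fin m → ℝ, (∀ j, x j ≤ y j) → y ∈ A

/-- The family of random variables `p` is PRDS on `I0`: for every `i ∈ I0` and every
nondecreasing measurable set `A`, the conditional probability `u ↦ P[p ∈ A | pᵢ = u]` is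
nondecreasing in `u` (formalized via a monotone version of the conditional expectation of
the indicator of `A` given `pᵢ`). -/
def PRDSOn {Ω : Type*} [MeasurableSpace Ω] (μ : Measure Ω) {m : ℕ}
    (p : Fin m → Ω → ℝ) (I0 : Finset (Fin m)) : Prop :=
  ∀ i ∈ I0, ∀ A : Set (Fin m → ℝ), MeasurableSet A → IsNondecreasingSet A →
    ∃ g : ℝ → ℝ, Monotone g ∧
      (fun ω => g (p i ω))
        =ᵐ[μ] μ[(A.indicator fun _ => (1 : ℝ)) ∘ (fun ω j => p j ω) |
                 MeasurableSpace.comap (p i) inferInstance]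

/-!
The number of BH rejections is `R = max {k ≤ m | k ≤ #{j | pⱼ ≤ αk/m}}`, a fixed point of
`k ↦ #{j | pⱼ ≤ αk/m}`; hence BH rejects exactly the `pᵢ ≤ αR/m`, and `R` is antitone in the
p-values, so the events `{R ≤ n}` are nondecreasing. Splitting according to the value of `R`,
`FDP = ∑_{i ∈ H0} ∑_k 1{pᵢ ≤ αk/m, R = k} / k`. For a null `i`, PRDS says that
`u ↦ P(R ≤ n | pᵢ ≤ u)` is nondecreasing; together with `P(pᵢ ≤ αk/m) ≤ αk/m` the sum over `k`
telescopes to at most `α/m · P(R ≤ m | pᵢ ≤ α) ≤ α/m`.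
-/

section StepUp

variable {m : ℕ} {α : ℝ}

noncomputable def bhCount (m : ℕ) (α : ℝ) (x : Fin m → ℝ) (k : ℕ) : ℕ :=
  #{j | x j ≤ α * k / m}

noncomputable def bhIndex (m : ℕ) (α : ℝ) (x : Fin m → ℝ) : ℕ :=
  (Icc 1 m).sup fun k => if k ≤ bhCount m α x k then k else 0

lemma bhCount_le (x : Fin m → ℝ) (k : ℕ) : bhCount m α x k ≤ m :=
  card_le_univ _ |>.trans_eq (Fintype.card_fin m)

lemma bhCount_mono (hα : 0 ≤ α) (x : Fin m → ℝ) : Monotone (bhCount m α x) := fun k k' hk =>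
  card_le_card fun j hj => by
    simp only [mem_filter, mem_univ, true_and] at hj ⊢
    exact hj.trans (by gcongr)

lemma bhCount_antitone (k : ℕ) : Antitone fun x : Fin m → ℝ => bhCount m α x k :=
  fun x y hxy => card_le_card fun j hj => by
    simp only [mem_filter, mem_univ, true_and] at hj ⊢
    exact (hxy j).trans hj

lemma measurable_bhCount (k : ℕ) : Measurable fun x : Fin m → ℝ => bhCount m α x k := by
  simp only [bhCount, card_filter]
  exact Finset.measurable_sum _ fun j _ => Measurable.ite
    (measurableSet_le (measurable_pi_apply j) measurable_const) measurable_const measurable_const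

lemma le_bhIndex {x : Fin m → ℝ} {k : ℕ} (hk : k ∈ Icc 1 m) (h : k ≤ bhCount m α x k) :
    k ≤ bhIndex m α x := by
  have := le_sup (f := fun k => if k ≤ bhCount m α x k then k else 0) hk
  simp only [h, if_true] at this
  exact this

lemma bhIndex_le (x : Fin m → ℝ) : bhIndex m α x ≤ m :=
  Finset.sup_le fun k hk => by
    split_ifs
    · exact (mem_Icc.1 hk).2
    · exact Nat.zero_le m

lemma bhIndex_le_bhCount (x : Fin m → ℝ) : bhIndex m α x ≤ bhCount m α x (bhIndex m α x) := by
  rcases (Icc 1 m).eq_empty_or_nonempty with hempty | hne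
  · simp [bhIndex, hempty]
  obtain ⟨k, -, hk⟩ := exists_mem_eq_sup _ hne fun k => if k ≤ bhCount m α x k then k else 0
  rw [bhIndex, hk]
  split_ifs with h
  · exact h
  · exact Nat.zero_le _

lemma bhCount_bhIndex (hα : 0 ≤ α) (x : Fin m → ℝ) :
    bhCount m α x (bhIndex m α x) = bhIndex m α x := by
  refine le_antisymm ?_ (bhIndex_le_bhCount x)
  by_contra! hlt
  have hmem : bhCount m α x (bhIndex m α x) ∈ Icc 1 m := mem_Icc.2 ⟨by omega, bhCount_le x _⟩
  have := le_bhIndex hmem (bhCount_mono hα x hlt.le)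
  omega

lemma bhRejects_iff (hα : 0 ≤ α) (x : Fin m → ℝ) (i : Fin m) :
    bhRejects m α x i ↔ x i ≤ α * bhIndex m α x / m := by
  constructor
  · rintro ⟨k, hk, hxi, hkc⟩
    exact hxi.trans (by gcongr; exact le_bhIndex hk hkc)
  · intro hxi
    have hpos : 1 ≤ bhIndex m α x := by
      by_contra! h0
      have : 0 < bhCount m α x (bhIndex m α x) := card_pos.2 ⟨i, by simpa using hxi⟩
      have := bhCount_bhIndex hα x
      omega
    exact ⟨_, mem_Icc.2 ⟨hpos, bhIndex_le x⟩, hxi, (bhCount_bhIndex hα x).ge⟩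

lemma bhR_eq_bhIndex (hα : 0 ≤ α) : bhR m α = bhIndex m α := by
  ext x
  simp_rw [bhR, bhRejects_iff hα]
  exact bhCount_bhIndex hα x

lemma bhIndex_antitone : Antitone (bhIndex m α) := fun x y hxy =>
  Finset.sup_le fun k hk => by
    split_ifs with h
    · exact le_bhIndex hk (h.trans (bhCount_antitone k hxy))
    · exact Nat.zero_le _

lemma measurable_bhIndex : Measurable (bhIndex m α) := by
  have : bhIndex m α = (Icc 1 m).sup fun k x => if k ≤ bhCount m α x k then k else 0 := by
    ext x
    simp [bhIndex, Finset.sup_apply]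
  rw [this]
  exact sup_induction measurable_const (fun _ hf _ hg => hf.sup hg) fun k _ =>
    Measurable.ite (measurable_bhCount k .of_discrete) measurable_const measurable_const

lemma bhR_antitone (hα : 0 ≤ α) : Antitone (bhR m α) :=
  bhR_eq_bhIndex hα ▸ bhIndex_antitone

lemma measurable_bhR (hα : 0 ≤ α) : Measurable (bhR m α) :=
  bhR_eq_bhIndex hα ▸ measurable_bhIndex

lemma Antitone.isNondecreasingSet_preimage_Iic {f : (Fin m → ℝ) → ℕ} (hf : Antitone f)
    (n : ℕ) : IsNondecreasingSet (f ⁻¹' Set.Iic n) :=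
  fun _ hx _ hxy => (hf hxy).trans hx

lemma bhFDP_eq_sum_indicator (hα : 0 ≤ α) (H0 : Finset (Fin m)) (x : Fin m → ℝ) :
    bhFDP m α H0 x = ∑ i ∈ H0, ∑ k ∈ Icc 1 m,
      {y : Fin m → ℝ | y i ≤ α * k / m ∧ bhR m α y = k}.indicator (fun _ => (k : ℝ)⁻¹) x := by
  have hrej : ∀ i, bhRejects m α x i ↔ x i ≤ α * bhR m α x / m := fun i => by
    rw [bhRejects_iff hα, bhR_eq_bhIndex hα]
  rcases Nat.eq_zero_or_pos (bhR m α x) with h0 | hpos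
  · refine (div_eq_zero_iff.2 (Or.inr (by exact_mod_cast h0))).trans
      (sum_eq_zero fun i _ => sum_eq_zero fun k hk => ?_).symm
    exact Set.indicator_of_notMem (fun h => by have := (mem_Icc.1 hk).1; have := h.2; omega) _
  have hR : bhR m α x ∈ Icc 1 m := mem_Icc.2 ⟨hpos, bhR_eq_bhIndex hα ▸ bhIndex_le x⟩
  rw [bhFDP, bhFP, card_filter, Nat.cast_sum, sum_div]
  refine sum_congr rfl fun i _ => ?_
  rw [sum_eq_single_of_mem _ hR fun k _ hk => Set.indicator_of_notMem (fun h => hk h.2.symm) _]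
  by_cases hi : x i ≤ α * bhR m α x / m <;> simp [hi, hrej]

lemma integral_bhFDP_eq_sum {Ω : Type*} [MeasurableSpace Ω] {μ : Measure Ω} [IsFiniteMeasure μ]
    (hα : 0 ≤ α) (H0 : Finset (Fin m)) {X : Ω → Fin m → ℝ} (hX : Measurable X) :
    ∫ ω, bhFDP m α H0 (X ω) ∂μ =
      ∑ i ∈ H0, ∑ k ∈ Icc 1 m, μ.real {ω | X ω i ≤ α * k / m ∧ bhR m α (X ω) = k} / k := by
  have hS : ∀ (i : Fin m) (k : ℕ),
      MeasurableSet (X ⁻¹' {y : Fin m → ℝ | y i ≤ α * k / m ∧ bhR m α y = k}) := fun i k =>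
    hX <| (measurableSet_le (measurable_pi_apply i) measurable_const).inter
      (measurable_bhR hα (measurableSet_singleton k))
  simp_rw [bhFDP_eq_sum_indicator hα, ← Set.indicator_comp_right X, Function.comp_def]
  rw [integral_finsetSum _ fun i _ => integrable_finsetSum _ fun k _ =>
    (integrable_const _).indicator (hS i k)]
  refine sum_congr rfl fun i _ => ?_
  rw [integral_finsetSum _ fun k _ => (integrable_const _).indicator (hS i k)]
  refine sum_congr rfl fun k _ => ?_
  rw [integral_indicator_const _ (hS i k), smul_eq_mul, div_eq_mul_inv]
  rfl

end StepUp

section Conditioning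

variable {Ω : Type*} [MeasurableSpace Ω] {μ : Measure Ω} [IsFiniteMeasure μ] {Y : Ω → ℝ}

lemma setIntegral_Iic_mul_le_of_monotone (hY : Measurable Y) {g : ℝ → ℝ} (hg : Monotone g)
    (hgY : Integrable (fun ω => g (Y ω)) μ) {u u' : ℝ} (hu : u ≤ u') :
    (∫ ω in Y ⁻¹' Set.Iic u, g (Y ω) ∂μ) * μ.real (Y ⁻¹' Set.Iic u') ≤
      (∫ ω in Y ⁻¹' Set.Iic u', g (Y ω) ∂μ) * μ.real (Y ⁻¹' Set.Iic u) := by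
  set B := Y ⁻¹' Set.Iic u
  set B' := Y ⁻¹' Set.Iic u'
  have hB : MeasurableSet B := hY measurableSet_Iic
  have hD : MeasurableSet (B' \ B) := (hY measurableSet_Iic).diff hB
  have hBB' : B ⊆ B' := Set.preimage_mono (Set.Iic_subset_Iic.2 hu)
  have hsplit : ∫ ω in B', g (Y ω) ∂μ = (∫ ω in B, g (Y ω) ∂μ) + ∫ ω in B' \ B, g (Y ω) ∂μ := by
    rw [← setIntegral_union Set.disjoint_sdiff_right hD hgY.integrableOn hgY.integrableOn,
      Set.union_sdiff_cancel hBB']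
  have hmeas : μ.real B' = μ.real B + μ.real (B' \ B) := by
    rw [measureReal_sdiff hBB' hB]
    ring
  have hlow : ∫ ω in B, g (Y ω) ∂μ ≤ g u * μ.real B := by
    calc ∫ ω in B, g (Y ω) ∂μ ≤ ∫ _ in B, g u ∂μ :=
          setIntegral_mono_on hgY.integrableOn integrableOn_const hB fun ω hω => hg hω
      _ = g u * μ.real B := by rw [setIntegral_const, smul_eq_mul, mul_comm]
  have hhigh : g u * μ.real (B' \ B) ≤ ∫ ω in B' \ B, g (Y ω) ∂μ := by
    calc g u * μ.real (B' \ B) = ∫ _ in B' \ B, g u ∂μ := by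
          rw [setIntegral_const, smul_eq_mul, mul_comm]
      _ ≤ ∫ ω in B' \ B, g (Y ω) ∂μ :=
          setIntegral_mono_on integrableOn_const hgY.integrableOn hD
            fun ω hω => hg (not_le.1 hω.2).le
  rw [hsplit, hmeas]
  nlinarith [mul_le_mul_of_nonneg_right hlow (measureReal_nonneg (μ := μ) (s := B' \ B)),
    mul_le_mul_of_nonneg_left hhigh (measureReal_nonneg (μ := μ) (s := B))]

lemma measureReal_inter_Iic_mul_le_of_condExp_monotone (hY : Measurable Y) {S : Set Ω}
    (hS : MeasurableSet S) {g : ℝ → ℝ} (hg : Monotone g)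
    (hgS : (fun ω => g (Y ω)) =ᵐ[μ]
      μ[S.indicator fun _ => (1 : ℝ) | MeasurableSpace.comap Y inferInstance])
    {u u' : ℝ} (hu : u ≤ u') :
    μ.real (S ∩ Y ⁻¹' Set.Iic u) * μ.real (Y ⁻¹' Set.Iic u') ≤
      μ.real (S ∩ Y ⁻¹' Set.Iic u') * μ.real (Y ⁻¹' Set.Iic u) := by
  have hint : ∀ v, ∫ ω in Y ⁻¹' Set.Iic v, g (Y ω) ∂μ = μ.real (S ∩ Y ⁻¹' Set.Iic v) := by
    intro v
    rw [setIntegral_congr_ae (hY measurableSet_Iic) (hgS.mono fun _ h _ => h),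
      setIntegral_condExp hY.comap_le ((integrable_const 1).indicator hS)
        ⟨Set.Iic v, measurableSet_Iic, rfl⟩,
      setIntegral_indicator hS]
    simp [Set.inter_comm]
  rw [← hint, ← hint]
  exact setIntegral_Iic_mul_le_of_monotone hY hg (integrable_condExp.congr hgS.symm) hu

end Conditioning

lemma PRDSOn.measureReal_inter_Iic_mul_le {Ω : Type*} [MeasurableSpace Ω] {μ : Measure Ω}
    [IsFiniteMeasure μ] {m : ℕ} {p : Fin m → Ω → ℝ} {I0 : Finset (Fin m)}
    (hprds : PRDSOn μ p I0) (hmeas : ∀ i, Measurable (p i)) {i : Fin m} (hi : i ∈ I0)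
    {A : Set (Fin m → ℝ)} (hA : MeasurableSet A) (hAmono : IsNondecreasingSet A)
    {u u' : ℝ} (hu : u ≤ u') :
    μ.real ((fun ω j => p j ω) ⁻¹' A ∩ p i ⁻¹' Set.Iic u) * μ.real (p i ⁻¹' Set.Iic u') ≤
      μ.real ((fun ω j => p j ω) ⁻¹' A ∩ p i ⁻¹' Set.Iic u') * μ.real (p i ⁻¹' Set.Iic u) := by
  obtain ⟨g, hg, hgA⟩ := hprds i hi A hA hAmono
  refine measureReal_inter_Iic_mul_le_of_condExp_monotone (hmeas i)
    (measurable_pi_lambda _ hmeas hA) hg ?_ hu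
  have hind : (A.indicator fun _ => (1 : ℝ)) ∘ (fun ω j => p j ω) =
      ((fun ω j => p j ω) ⁻¹' A).indicator fun _ => 1 :=
    funext fun _ => (Set.indicator_comp_right (fun ω j => p j ω)).symm
  rwa [hind] at hgA

/- Applied with `b k = P(Y ≤ ck)`, `G k = P(R ≤ k, Y ≤ ck)` and `H k = P(R ≤ k - 1, Y ≤ ck)`, so
that `G k - H k = P(R = k, Y ≤ ck)` and `hGH` is the PRDS inequality. -/
lemma sum_Icc_sub_div_le_mul_div {b G H : ℕ → ℝ} {c : ℝ} (hc : 0 ≤ c) (hb : Monotone b)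
    (hH : ∀ k, 0 ≤ H k) (hHG : ∀ k, H k ≤ G k) (hGb : ∀ k, G k ≤ b k)
    (hGH : ∀ k, G k * b (k + 1) ≤ H (k + 1) * b k) (n : ℕ) (hbc : ∀ k ∈ Icc 1 n, b k ≤ c * k) :
    ∑ k ∈ Icc 1 n, (G k - H k) / k ≤ c * (G n / b n) := by
  have hG : ∀ k, 0 ≤ G k := fun k => (hH k).trans (hHG k)
  have hb0 : ∀ k, 0 ≤ b k := fun k => (hG k).trans (hGb k)
  induction n with
  | zero => simpa using mul_nonneg hc (div_nonneg (hG 0) (hb0 0))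
  | succ n ih =>
    have ih := ih fun k hk => hbc k (Icc_subset_Icc_right n.le_succ hk)
    rw [sum_Icc_succ_top (by omega)]
    rcases (hb0 (n + 1)).eq_or_lt with hzero | hpos
    · have hbn : b n = 0 := le_antisymm (hzero ▸ hb n.le_succ) (hb0 n)
      have hGn : G (n + 1) = 0 := le_antisymm (hzero ▸ hGb _) (hG _)
      have hHn : H (n + 1) = 0 := le_antisymm (hGn ▸ hHG _) (hH _)
      simpa [hbn, hGn, hHn, ← hzero] using ih
    have hlast : (G (n + 1) - H (n + 1)) / (n + 1 : ℕ) ≤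
        c * ((G (n + 1) - H (n + 1)) / b (n + 1)) := by
      rw [mul_div_assoc', div_le_div_iff₀ (by positivity) hpos]
      nlinarith [mul_le_mul_of_nonneg_left (hbc (n + 1) (mem_Icc.2 ⟨by omega, le_rfl⟩))
        (sub_nonneg.2 (hHG (n + 1)))]
    have hstep : c * (G n / b n) ≤ c * (H (n + 1) / b (n + 1)) := by
      refine mul_le_mul_of_nonneg_left ?_ hc
      rcases (hb0 n).eq_or_lt with hbn | hbn
      · simpa [← hbn] using div_nonneg (hH _) hpos.le
      · rw [div_le_div_iff₀ hbn hpos]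
        exact hGH n
    calc _ ≤ c * (H (n + 1) / b (n + 1)) + c * ((G (n + 1) - H (n + 1)) / b (n + 1)) :=
          add_le_add (ih.trans hstep) hlast
      _ = c * (G (n + 1) / b (n + 1)) := by ring

lemma sum_measureReal_le_and_eq_div_le {Ω : Type*} [MeasurableSpace Ω] {μ : Measure Ω}
    [IsFiniteMeasure μ] {Y : Ω → ℝ} {R : Ω → ℕ} (hY : Measurable Y) (hR : Measurable R)
    {c : ℝ} (hc : 0 ≤ c) (m : ℕ)
    (hprds : ∀ (n : ℕ) (u u' : ℝ), u ≤ u' →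
      μ.real (R ⁻¹' Set.Iic n ∩ Y ⁻¹' Set.Iic u) * μ.real (Y ⁻¹' Set.Iic u') ≤
        μ.real (R ⁻¹' Set.Iic n ∩ Y ⁻¹' Set.Iic u') * μ.real (Y ⁻¹' Set.Iic u))
    (hsuper : ∀ k ∈ Icc 1 m, μ.real (Y ⁻¹' Set.Iic (c * k)) ≤ c * k) :
    ∑ k ∈ Icc 1 m, μ.real {ω | Y ω ≤ c * k ∧ R ω = k} / k ≤ c := by
  set b : ℕ → ℝ := fun k => μ.real (Y ⁻¹' Set.Iic (c * k))
  set F : ℕ → ℕ → ℝ := fun n k => μ.real (R ⁻¹' Set.Iic n ∩ Y ⁻¹' Set.Iic (c * k))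
  have hF : ∀ k : ℕ, 1 ≤ k → μ.real {ω | Y ω ≤ c * k ∧ R ω = k} = F k k - F (k - 1) k := by
    intro k hk
    rw [← measureReal_sdiff
      (Set.inter_subset_inter_left _ (Set.preimage_mono (Set.Iic_subset_Iic.2 (Nat.sub_le k 1))))
      ((hR measurableSet_Iic).inter (hY measurableSet_Iic))]
    congr 1
    ext ω
    simp only [Set.mem_ofPred_eq, Set.mem_sdiff, Set.mem_inter_iff, Set.mem_preimage, Set.mem_Iic]
    grind
  have hmono : ∀ {n n' k k'}, n ≤ n' → k ≤ k' → F n k ≤ F n' k' := fun hn hk =>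
    measureReal_mono (Set.inter_subset_inter (Set.preimage_mono (Set.Iic_subset_Iic.2 hn))
      (Set.preimage_mono (Set.Iic_subset_Iic.2 (by gcongr))))
  calc ∑ k ∈ Icc 1 m, μ.real {ω | Y ω ≤ c * k ∧ R ω = k} / k
      = ∑ k ∈ Icc 1 m, (F k k - F (k - 1) k) / k :=
        sum_congr rfl fun k hk => by rw [hF k (mem_Icc.1 hk).1]
    _ ≤ c * (F m m / b m) := sum_Icc_sub_div_le_mul_div hc
        (fun k k' hk => measureReal_mono (Set.preimage_mono (Set.Iic_subset_Iic.2 (by gcongr))))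
        (fun _ => measureReal_nonneg) (fun k => hmono (Nat.sub_le k 1) le_rfl)
        (fun _ => measureReal_mono Set.inter_subset_right)
        (fun k => by simpa using hprds k _ _ (by gcongr; simp)) m hsuper
    _ ≤ c := mul_le_of_le_one_right hc (div_le_one_of_le₀ (measureReal_mono Set.inter_subset_right)
        measureReal_nonneg)

theorem prds_bh_fdr_control_general
    {Ω : Type*} [MeasurableSpace Ω] (μ : Measure Ω) [IsProbabilityMeasure μ]
    (m m0 : ℕ) (H0 : Finset (Fin m)) (hcard : H0.card = m0)
    (p : Fin m → Ω → ℝ) (hmeas : ∀ i, Measurable (p i))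
    (α : ℝ) (hα : α ∈ Set.Ioc (0 : ℝ) 1)
    (hprds : PRDSOn μ p H0)
    (hsuper : ∀ i ∈ H0, ∀ k ∈ Finset.Icc 1 m,
      μ {ω | p i ω ≤ α * k / m} ≤ ENNReal.ofReal (α * k / m)) :
    ∫ ω, bhFDP m α H0 (fun i => p i ω) ∂μ ≤ m0 * α / m := by
  have hα0 : 0 ≤ α := hα.1.le
  have hX : Measurable fun ω j => p j ω := measurable_pi_lambda _ hmeas
  rw [integral_bhFDP_eq_sum hα0 H0 hX]
  calc _ ≤ ∑ _i ∈ H0, α / m := sum_le_sum fun i hi => ?_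
    _ = m0 * α / m := by rw [sum_const, hcard, nsmul_eq_mul, mul_div_assoc]
  simp_rw [mul_div_right_comm α] at hsuper ⊢
  refine sum_measureReal_le_and_eq_div_le (hmeas i) ((measurable_bhR hα0).comp hX)
    (by positivity) m (fun n u u' hu => ?_) fun k hk => ?_
  · exact hprds.measureReal_inter_Iic_mul_le hmeas hi (measurable_bhR hα0 measurableSet_Iic)
      ((bhR_antitone hα0).isNondecreasingSet_preimage_Iic n) hu
  · exact ENNReal.toReal_le_of_le_ofReal (by positivity) (hsuper i hi k hk)

/-- if the p-value family is PRDS on the null set `H0` and super-uniform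
at all possible BH thresholds, then BH at level `α` satisfies `FDR ≤ m0 * α / m`. -/
theorem prds_bh_fdr_control
    {Ω : Type*} [MeasurableSpace Ω] (μ : Measure Ω) [IsProbabilityMeasure μ]
    (m m0 : ℕ) (hm : 0 < m) (H0 : Finset (Fin m)) (hcard : H0.card = m0)
    (p : Fin m → Ω → ℝ) (hmeas : ∀ i, Measurable (p i))
    (hrange : ∀ i ω, p i ω ∈ Set.Icc (0 : ℝ) 1)
    (α : ℝ) (hα : α ∈ Set.Ioc (0 : ℝ) 1)
    (hprds : PRDSOn μ p H0)
    (hsuper : ∀ i ∈ H0, ∀ k ∈ Finset.Icc 1 m,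
      μ {ω | p i ω ≤ α * k / m} ≤ ENNReal.ofReal (α * k / m)) :
    ∫ ω, bhFDP m α H0 (fun i => p i ω) ∂μ ≤ m0 * α / m :=
  prds_bh_fdr_control_general μ m m0 H0 hcard p hmeas α hα hprds hsuper
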